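/- arXiv:2207.07067 — 3 statements merged into one kernel-verified Lean document; each statement's English description precedes it below -/
import Mathlib

section
/- Let X = {x ∈ ℝ^{n_x} | H_x x ≤ h_x} and Y = {y ∈ ℝ^{n_y} | H_y y ≤ h_y}, where H_x ∈ ℝ^{m_x × n_x}, h_x ∈ ℝ^{m_x}, H_y ∈ ℝ^{m_y × n_y}, h_y ∈ ℝ^{m_y}, and assume X is nonempty. Given a vector γ ∈ ℝ^{n_y} and a matrix Γ ∈ ℝ^{n_y × n_x}, the inclusion γ + ΓX ⊆ Y holds if and only if there exists a matrix Λ ∈ ℝ^{m_y × m_x} such that Λ ≥ 0, Λ H_x = H_y Γ, and Λ h_x ≤ h_y − H_y γ. -/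
open Matrix


lemma cone_caratheodory {E : Type*} [AddCommGroup E] [Module ℝ E] {m : ℕ}
    (v : Fin m → E) (l : Fin m → ℝ) (hl : ∀ i, 0 ≤ l i) :
    ∃ μ : Fin m → ℝ, (∀ i, 0 ≤ μ i) ∧ (∑ i, μ i • v i = ∑ i, l i • v i) ∧
      LinearIndependent ℝ (fun i : {i : Fin m // μ i ≠ 0} => v i) := by
  suffices H : ∀ N : ℕ, ∀ l : Fin m → ℝ,
      (Finset.univ.filter (fun i => l i ≠ 0)).card ≤ N → (∀ i, 0 ≤ l i) →
      ∃ μ : Fin m → ℝ, (∀ i, 0 ≤ μ i) ∧ (∑ i, μ i • v i = ∑ i, l i • v i) ∧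
        LinearIndependent ℝ (fun i : {i : Fin m // μ i ≠ 0} => v i) by
    exact H _ l le_rfl hl
  intro N
  induction N with
  | zero =>
    intro l hcard hl
    refine ⟨l, hl, rfl, ?_⟩
    have hemp : ∀ i, ¬ (l i ≠ 0) := by
      intro i hi
      have : i ∈ Finset.univ.filter (fun i => l i ≠ 0) := by simp [hi]
      have := Finset.card_pos.mpr ⟨i, this⟩
      omega
    haveI : IsEmpty {i : Fin m // l i ≠ 0} := ⟨fun ⟨i, hi⟩ => hemp i hi⟩
    exact linearIndependent_empty_type
  | succ N ih =>
    intro l hcard hl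
    by_cases hli : LinearIndependent ℝ (fun i : {i : Fin m // l i ≠ 0} => v i)
    · exact ⟨l, hl, rfl, hli⟩
    rw [Fintype.linearIndependent_iff] at hli
    push_neg at hli
    obtain ⟨g, hg0, i₀, hgi₀⟩ := hli
    -- extend g to c on Fin m, with sign chosen so that c i₀ > 0
    set s : ℝ := if 0 < g i₀ then 1 else -1 with hs
    have hs0 : s ≠ 0 := by
      rcases lt_or_ge 0 (g i₀) with h | h
      · simp [hs, h]
      · simp [hs, not_lt.mpr h]
    set c : Fin m → ℝ := fun i => if h : l i ≠ 0 then s * g ⟨i, h⟩ else 0 with hc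
    have hci₀ : 0 < c (i₀ : Fin m) := by
      have : c (i₀ : Fin m) = s * g i₀ := by
        rw [hc]; simp only
        rw [dif_pos i₀.2]
      rw [this, hs]
      rcases lt_or_ge 0 (g i₀) with h | h
      · simp [h]
      · have : g i₀ < 0 := lt_of_le_of_ne h hgi₀
        simp [not_lt.mpr h]
        nlinarith
    have hcl : ∀ i, l i = 0 → c i = 0 := by
      intro i hi; rw [hc]; simp [hi]
    have hcsum : ∑ i, c i • v i = 0 := by
      have h1 : ∑ i, c i • v i = ∑ i ∈ Finset.univ.filter (fun i => l i ≠ 0), c i • v i := by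
        refine (Finset.sum_subset (Finset.filter_subset _ _) ?_).symm
        intro i _ hi
        simp only [Finset.mem_filter, Finset.mem_univ, true_and, not_not] at hi
        rw [hcl i hi, zero_smul]
      have h2 : ∑ i ∈ Finset.univ.filter (fun i => l i ≠ 0), c i • v i
          = ∑ i : {i : Fin m // l i ≠ 0}, (s * g i) • v i := by
        rw [Finset.sum_subtype (p := fun i => l i ≠ 0) _ (by simp) (fun i => c i • v i)]
        refine Finset.sum_congr rfl fun i _ => ?_
        congr 1
        simp only [hc]
        rw [dif_pos i.2]
      rw [h1, h2]
      simp_rw [mul_smul, ← Finset.smul_sum, hg0, smul_zero]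
    -- pick the minimizing index
    set T : Finset (Fin m) := Finset.univ.filter (fun i => 0 < c i) with hT
    have hTne : T.Nonempty := ⟨i₀, by simp [hT, hci₀]⟩
    set t : ℝ := T.inf' hTne (fun i => l i / c i) with ht
    have ht0 : 0 ≤ t := by
      rw [ht]
      apply Finset.le_inf'
      intro i hi
      simp only [hT, Finset.mem_filter] at hi
      exact div_nonneg (hl i) hi.2.le
    set μ : Fin m → ℝ := fun i => l i - t * c i with hμ
    have hμ0 : ∀ i, 0 ≤ μ i := by
      intro i
      rw [hμ]
      simp only
      rcases lt_or_ge 0 (c i) with h | h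
      · have hiT : i ∈ T := by simp [hT, h]
        have := Finset.inf'_le (fun i => l i / c i) hiT
        rw [← ht] at this
        rw [sub_nonneg]
        calc t * c i ≤ (l i / c i) * c i := by nlinarith
          _ = l i := by field_simp
      · nlinarith [hl i]
    obtain ⟨i₁, hi₁T, hi₁⟩ := Finset.exists_mem_eq_inf' hTne (fun i => l i / c i)
    have hci₁ : 0 < c i₁ := by simpa [hT] using hi₁T
    have hμi₁ : μ i₁ = 0 := by
      rw [hμ]; simp only
      rw [ht, hi₁]
      field_simp
      ring
    have hli₁ : l i₁ ≠ 0 := by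
      intro h
      have := hcl i₁ h
      rw [this] at hci₁
      exact lt_irrefl 0 hci₁
    have hsub : Finset.univ.filter (fun i => μ i ≠ 0)
        ⊆ (Finset.univ.filter (fun i => l i ≠ 0)).erase i₁ := by
      intro i hi
      simp only [Finset.mem_filter, Finset.mem_univ, true_and] at hi
      rw [Finset.mem_erase]
      constructor
      · intro h; rw [h] at hi; exact hi hμi₁
      · simp only [Finset.mem_filter, Finset.mem_univ, true_and]
        intro h
        apply hi
        rw [hμ]; simp only
        rw [h, hcl i h]; ring
    have hcard' : (Finset.univ.filter (fun i => μ i ≠ 0)).card ≤ N := by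
      have h1 := Finset.card_le_card hsub
      have h2 : ((Finset.univ.filter (fun i => l i ≠ 0)).erase i₁).card
          = (Finset.univ.filter (fun i => l i ≠ 0)).card - 1 := by
        apply Finset.card_erase_of_mem
        simp [hli₁]
      have h3 : 0 < (Finset.univ.filter (fun i => l i ≠ 0)).card :=
        Finset.card_pos.mpr ⟨i₁, by simp [hli₁]⟩
      omega
    obtain ⟨ν, hν0, hνsum, hνli⟩ := ih μ hcard' hμ0
    refine ⟨ν, hν0, ?_, hνli⟩
    rw [hνsum]
    have : ∑ i, μ i • v i = ∑ i, l i • v i - t • ∑ i, c i • v i := by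
      rw [Finset.smul_sum, ← Finset.sum_sub_distrib]
      refine Finset.sum_congr rfl fun i _ => ?_
      rw [hμ]; simp only
      rw [sub_smul, smul_smul]
    rw [this, hcsum, smul_zero, sub_zero]


lemma cone_isClosed {E : Type*} [NormedAddCommGroup E] [NormedSpace ℝ E]
    [FiniteDimensional ℝ E] {m : ℕ} (v : Fin m → E) :
    IsClosed {x : E | ∃ l : Fin m → ℝ, (∀ i, 0 ≤ l i) ∧ x = ∑ i, l i • v i} := by
  classical
  have key : {x : E | ∃ l : Fin m → ℝ, (∀ i, 0 ≤ l i) ∧ x = ∑ i, l i • v i}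
      = ⋃ s ∈ {s : Finset (Fin m) | LinearIndependent ℝ (fun i : s => v i)},
        (fun l : s → ℝ => ∑ i, l i • v (i : Fin m)) '' {l | ∀ i, 0 ≤ l i} := by
    ext x
    simp only [Set.mem_setOf_eq, Set.mem_iUnion, Set.mem_image, exists_prop]
    constructor
    · rintro ⟨l, hl, rfl⟩
      obtain ⟨μ, hμ0, hμsum, hμli⟩ := cone_caratheodory v l hl
      set s : Finset (Fin m) := Finset.univ.filter (fun i => μ i ≠ 0) with hs
      have he : ∀ i : Fin m, i ∈ s ↔ μ i ≠ 0 := by intro i; simp [hs]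
      refine ⟨s, ?_, fun i => μ i, fun i => hμ0 i, ?_⟩
      · -- linear independence transported along the equivalence of subtypes
        have h1 := hμli.comp (Equiv.subtypeEquivRight he) (Equiv.injective _)
        have h2 : (fun i : {i : Fin m // i ∈ s} => v (i : Fin m))
            = (fun i : {i : Fin m // μ i ≠ 0} => v (i : Fin m))
              ∘ (Equiv.subtypeEquivRight he) := by
          funext i
          simp [Equiv.subtypeEquivRight]
          rfl
        rw [h2]
        exact h1
      · rw [← hμsum]
        rw [Finset.sum_coe_sort s (fun i => μ i • v i)]
        refine Finset.sum_subset (Finset.subset_univ s) ?_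
        intro i _ his
        have : μ i = 0 := not_not.mp (fun hh => his ((he i).mpr hh))
        simp [this]
    · rintro ⟨s, hsli, l, hl0, rfl⟩
      refine ⟨fun i => if h : i ∈ s then l ⟨i, h⟩ else 0, ?_, ?_⟩
      · intro i; dsimp only
        split
        · exact hl0 _
        · exact le_rfl
      · have h1 : ∑ i : Fin m, (fun i => if h : i ∈ s then l ⟨i, h⟩ else 0) i • v i
            = ∑ i ∈ s, (if h : i ∈ s then l ⟨i, h⟩ else 0) • v i := by
          refine (Finset.sum_subset (Finset.subset_univ s) ?_).symm
          intro i _ his; simp [his]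
        rw [h1, ← Finset.sum_coe_sort s (fun i => (if h : i ∈ s then l ⟨i, h⟩ else 0) • v i)]
        refine Finset.sum_congr rfl fun i _ => ?_
        rw [dif_pos i.2]
  rw [key]
  refine Set.Finite.isClosed_biUnion (Set.toFinite _) ?_
  intro s hs
  let L : (s → ℝ) →ₗ[ℝ] E :=
    { toFun := fun l => ∑ i, l i • v (i : Fin m)
      map_add' := by intro a b; simp [add_smul, Finset.sum_add_distrib]
      map_smul' := by intro r a; simp [mul_smul, Finset.smul_sum] }
  have hinj : LinearMap.ker L = ⊥ := by
    rw [LinearMap.ker_eq_bot']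
    intro a ha
    rw [Set.mem_setOf_eq, Fintype.linearIndependent_iff] at hs
    exact funext (hs a ha)
  have hemb := LinearMap.isClosedEmbedding_of_injective hinj
  have himg : (fun l : s → ℝ => ∑ i, l i • v (i : Fin m)) '' {l | ∀ i, 0 ≤ l i}
      = L '' {l | ∀ i, 0 ≤ l i} := rfl
  rw [himg]
  apply hemb.isClosedMap
  have : {l : s → ℝ | ∀ i, 0 ≤ l i} = ⋂ i, {l : s → ℝ | 0 ≤ l i} := by
    ext; simp
  rw [this]
  exact isClosed_iInter fun i => isClosed_le continuous_const (continuous_apply i)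


open scoped InnerProductSpace in
lemma farkas_cone {k m : ℕ} (v : Fin m → (Fin k → ℝ)) (b : Fin k → ℝ)
    (h : ∀ y : Fin k → ℝ, (∀ i, 0 ≤ v i ⬝ᵥ y) → 0 ≤ b ⬝ᵥ y) :
    ∃ l : Fin m → ℝ, (∀ i, 0 ≤ l i) ∧ b = ∑ i, l i • v i := by
  classical
  set E := EuclideanSpace ℝ (Fin k) with hE
  let v' : Fin m → E := fun i => WithLp.toLp 2 (v i)
  let b' : E := WithLp.toLp 2 b
  -- the cone as a ConvexCone
  let S : Set E := {x : E | ∃ l : Fin m → ℝ, (∀ i, 0 ≤ l i) ∧ x = ∑ i, l i • v' i}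
  have hSclosed : IsClosed S := cone_isClosed v'
  let C : ConvexCone ℝ E :=
    { carrier := S
      smul_mem' := by
        rintro c hc x ⟨l, hl, rfl⟩
        refine ⟨fun i => c * l i, fun i => mul_nonneg hc.le (hl i), ?_⟩
        rw [Finset.smul_sum]
        exact Finset.sum_congr rfl fun i _ => (mul_smul c (l i) (v' i)).symm
      add_mem' := by
        rintro x ⟨l, hl, rfl⟩ y ⟨l', hl', rfl⟩
        refine ⟨fun i => l i + l' i, fun i => add_nonneg (hl i) (hl' i), ?_⟩
        rw [← Finset.sum_add_distrib]
        exact Finset.sum_congr rfl fun i _ => (add_smul (l i) (l' i) (v' i)).symm }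
  have hmem : ∀ i, v' i ∈ C := by
    intro i
    refine ⟨fun j => if j = i then 1 else 0, fun j => by positivity, ?_⟩
    simp [Finset.sum_ite_eq']
  have hinner : ∀ (x y : E), ⟪x, y⟫_ℝ = (x : Fin k → ℝ) ⬝ᵥ (y : Fin k → ℝ) := by
    intro x y
    rw [PiLp.inner_apply]
    simp [dotProduct, mul_comm]
  by_contra hcon
  have hb : b' ∉ C := by
    rintro ⟨l, hl, hbl⟩
    exact hcon ⟨l, hl, by simpa [b', v', map_sum] using congrArg (WithLp.linearEquiv 2 ℝ (Fin k → ℝ)) hbl⟩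
  obtain ⟨y, hy1, hy2⟩ : ∃ y : E, (∀ x ∈ C, 0 ≤ ⟪x, y⟫_ℝ) ∧ ⟪y, b'⟫_ℝ < 0 := by
    obtain ⟨y, hy1, hy2⟩ := ProperCone.hyperplane_separation'
      (⟨C.toPointedCone ⟨fun _ => 0, fun _ => le_rfl, by simp⟩, hSclosed⟩ : ProperCone ℝ E) hb
    exact ⟨y, hy1, by rwa [real_inner_comm]⟩
  have h1 : ∀ i, 0 ≤ v i ⬝ᵥ y := by
    intro i
    have := hy1 (v' i) (hmem i)
    rwa [hinner] at this
  have h2 := h y h1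
  replace h2 : 0 ≤ ⟪b', y⟫_ℝ := by rw [hinner]; exact h2
  rw [real_inner_comm] at hy2
  linarith


lemma affine_farkas {m n : ℕ} (A : Matrix (Fin m) (Fin n) ℝ) (b : Fin m → ℝ)
    (c : Fin n → ℝ) (d : ℝ) (hfeas : ∃ x, A.mulVec x ≤ b)
    (h : ∀ x, A.mulVec x ≤ b → c ⬝ᵥ x ≤ d) :
    ∃ l : Fin m → ℝ, (∀ i, 0 ≤ l i) ∧ (∀ j, ∑ i, l i * A i j = c j) ∧
      ∑ i, l i * b i ≤ d := by
  classical
  -- homogenization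
  set w : Fin (m + 1) → (Fin (n + 1) → ℝ) :=
    Fin.snoc (fun i => Fin.snoc (A i) (b i)) (Fin.snoc 0 1) with hw
  set t : Fin (n + 1) → ℝ := Fin.snoc c d with htt
  have key : ∀ y : Fin (n + 1) → ℝ, (∀ i, 0 ≤ w i ⬝ᵥ y) → 0 ≤ t ⬝ᵥ y := by
    intro y hy
    set z : Fin n → ℝ := fun j => y j.castSucc with hz
    set τ : ℝ := y (Fin.last n) with hτ
    have hdot : ∀ u : Fin n → ℝ, ∀ r : ℝ, (Fin.snoc u r : Fin (n+1) → ℝ) ⬝ᵥ y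
        = u ⬝ᵥ z + r * τ := by
      intro u r
      rw [dotProduct, Fin.sum_univ_castSucc]
      simp [dotProduct, hz, hτ]
    have hτ0 : 0 ≤ τ := by
      have := hy (Fin.last m)
      rw [hw] at this
      simp only [Fin.snoc_last] at this
      rw [hdot] at this
      simpa using this
    have hA : ∀ i : Fin m, 0 ≤ A i ⬝ᵥ z + b i * τ := by
      intro i
      have := hy i.castSucc
      rw [hw] at this
      simp only [Fin.snoc_castSucc] at this
      rwa [hdot] at this
    rw [htt, hdot]
    rcases eq_or_lt_of_le hτ0 with hτeq | hτpos
    · -- τ = 0 : recession direction argument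
      rw [← hτeq]
      simp only [mul_zero, add_zero]
      by_contra hcz
      push_neg at hcz
      obtain ⟨x₀, hx₀⟩ := hfeas
      set s : ℝ := (c ⬝ᵥ x₀ - d - 1) / (c ⬝ᵥ z) with hsdef
      have hnum : c ⬝ᵥ x₀ - d - 1 < 0 := by have := h x₀ hx₀; linarith
      have hs0 : 0 ≤ s := by
        rw [hsdef, div_eq_mul_inv]
        exact le_of_lt (mul_pos_of_neg_of_neg hnum (inv_lt_zero.mpr hcz))
      have hfeas2 : A.mulVec (x₀ - s • z) ≤ b := by
        intro i
        have hAz : 0 ≤ A i ⬝ᵥ z := by have := hA i; rw [← hτeq] at this; linarith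
        have : A.mulVec (x₀ - s • z) i = A.mulVec x₀ i - s * (A i ⬝ᵥ z) := by
          simp [Matrix.mulVec, dotProduct, Finset.mul_sum, Finset.sum_sub_distrib,
            mul_sub, mul_left_comm, mul_comm, mul_assoc]
        rw [this]
        have := hx₀ i
        nlinarith
      have hval : c ⬝ᵥ (x₀ - s • z) = d + 1 := by
        have hexp : c ⬝ᵥ (x₀ - s • z) = c ⬝ᵥ x₀ - s * (c ⬝ᵥ z) := by
          simp [dotProduct, Finset.mul_sum, Finset.sum_sub_distrib,
            mul_sub, mul_left_comm, mul_comm, mul_assoc]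
        rw [hexp, hsdef, div_mul_cancel₀ _ hcz.ne]
        ring
      have := h _ hfeas2
      rw [hval] at this
      linarith
    · -- τ > 0
      set x : Fin n → ℝ := (-τ⁻¹) • z with hx
      have hfeas2 : A.mulVec x ≤ b := by
        intro i
        have hexp : A.mulVec x i = (-τ⁻¹) * (A i ⬝ᵥ z) := by
          simp [hx, Matrix.mulVec, dotProduct, Finset.mul_sum,
            mul_left_comm, mul_comm, mul_assoc]
        rw [hexp]
        have h2 : 0 ≤ τ⁻¹ * (A i ⬝ᵥ z + b i * τ) :=
          mul_nonneg (inv_pos.mpr hτpos).le (hA i)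
        rw [mul_add, mul_comm (b i) τ, ← mul_assoc, inv_mul_cancel₀ hτpos.ne', one_mul] at h2
        linarith
      have hv := h x hfeas2
      have hexp : c ⬝ᵥ x = -τ⁻¹ * (c ⬝ᵥ z) := by
        simp [hx, dotProduct, Finset.mul_sum, mul_left_comm, mul_comm, mul_assoc]
      rw [hexp] at hv
      have h3 := mul_le_mul_of_nonneg_left hv hτ0
      rw [← mul_assoc, mul_neg, mul_inv_cancel₀ hτpos.ne'] at h3
      linarith
  obtain ⟨l', hl', hsum⟩ := farkas_cone w t key
  have happ : ∀ j : Fin (n + 1), t j = ∑ i, l' i * w i j := by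
    intro j
    rw [congrFun hsum j, Finset.sum_apply]
    exact Finset.sum_congr rfl fun i _ => rfl
  refine ⟨fun i => l' i.castSucc, fun i => hl' _, ?_, ?_⟩
  · intro j
    have hj := happ j.castSucc
    rw [htt] at hj
    rw [Fin.sum_univ_castSucc] at hj
    simp only [hw, Fin.snoc_castSucc, Fin.snoc_last, Pi.zero_apply, mul_zero, mul_one,
      add_zero] at hj
    exact hj.symm
  · have hj := happ (Fin.last n)
    rw [htt] at hj
    rw [Fin.sum_univ_castSucc] at hj
    simp only [hw, Fin.snoc_castSucc, Fin.snoc_last, mul_one] at hj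
    have := hl' (Fin.last m)
    linarith [hj]


/-- **Lemma 1 (AH-polytope in H-polytope).**
Let `X = {x | Hx x ≤ hx}` (nonempty) and `Y = {y | Hy y ≤ hy}`.  Given `γ` and `Γ`,
the inclusion `γ + Γ X ⊆ Y` holds iff there is an entrywise nonnegative matrix `Λ`
with `Λ Hx = Hy Γ` and `Λ hx ≤ hy - Hy γ`. -/
theorem ah_polytope_in_h_polytope
    {mx nx my ny : ℕ}
    (Hx : Matrix (Fin mx) (Fin nx) ℝ) (hx : Fin mx → ℝ)
    (Hy : Matrix (Fin my) (Fin ny) ℝ) (hy : Fin my → ℝ)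
    (X : Set (Fin nx → ℝ)) (Y : Set (Fin ny → ℝ))
    (hX : X = {x | Hx.mulVec x ≤ hx})
    (hY : Y = {y | Hy.mulVec y ≤ hy})
    (hne : X.Nonempty)
    (γ : Fin ny → ℝ) (Γ : Matrix (Fin ny) (Fin nx) ℝ) :
    ((fun x => γ + Γ.mulVec x) '' X ⊆ Y) ↔
      ∃ Λ : Matrix (Fin my) (Fin mx) ℝ,
        (∀ i j, 0 ≤ Λ i j) ∧ Λ * Hx = Hy * Γ ∧ Λ.mulVec hx ≤ hy - Hy.mulVec γ := by
  subst hX hY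
  constructor
  · intro hsub
    have hfeas : ∃ x, Hx.mulVec x ≤ hx := hne
    have H : ∀ i : Fin my, ∃ l : Fin mx → ℝ, (∀ k, 0 ≤ l k) ∧
        (∀ j, ∑ k, l k * Hx k j = (Hy * Γ) i j) ∧
        ∑ k, l k * hx k ≤ hy i - Hy.mulVec γ i := by
      intro i
      apply affine_farkas Hx hx ((Hy * Γ) i) (hy i - Hy.mulVec γ i) hfeas
      intro x hxX
      have hmem : γ + Γ.mulVec x ∈ {y | Hy.mulVec y ≤ hy} :=
        hsub ⟨x, hxX, rfl⟩
      have h1 := hmem i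
      have h2 : Hy.mulVec (γ + Γ.mulVec x) i
          = Hy.mulVec γ i + (Hy * Γ).mulVec x i := by
        rw [Matrix.mulVec_add, Matrix.mulVec_mulVec]
        rfl
      rw [h2] at h1
      have h3 : (Hy * Γ) i ⬝ᵥ x = (Hy * Γ).mulVec x i := rfl
      rw [h3]
      linarith
    choose L hL0 hLA hLb using H
    refine ⟨Matrix.of L, hL0, ?_, ?_⟩
    · ext i j
      rw [Matrix.mul_apply]
      exact hLA i j
    · intro i
      have : (Matrix.of L).mulVec hx i = ∑ k, L i k * hx k := rfl
      rw [this]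
      have : (hy - Hy.mulVec γ) i = hy i - Hy.mulVec γ i := rfl
      rw [this]
      exact hLb i
  · rintro ⟨Λ, hΛ0, hΛH, hΛh⟩
    rintro y ⟨x, hxX, rfl⟩
    intro i
    have h2 : Hy.mulVec (γ + Γ.mulVec x) i
        = Hy.mulVec γ i + Λ.mulVec (Hx.mulVec x) i := by
      rw [Matrix.mulVec_add, Matrix.mulVec_mulVec, ← hΛH, ← Matrix.mulVec_mulVec]
      rfl
    have h3 : Λ.mulVec (Hx.mulVec x) i ≤ Λ.mulVec hx i := by
      simp only [Matrix.mulVec, dotProduct]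
      apply Finset.sum_le_sum
      intro k _
      exact mul_le_mul_of_nonneg_left (hxX k) (hΛ0 i k)
    have h4 := hΛh i
    have h5 : (hy - Hy.mulVec γ) i = hy i - Hy.mulVec γ i := rfl
    rw [h5] at h4
    show Hy.mulVec (γ + Γ.mulVec x) i ≤ hy i
    rw [h2]
    linarith
end

section
/- Let H ∈ ℝ^{m × T}, let h_0, h_1, …, h_N ∈ ℝ^m, let U_0 = {u ∈ ℝ^T | Hu ≤ h_0} and U_i = {u ∈ ℝ^T | Hu ≤ h_i} for i = 1, …, N, and let U = Σ_{i=1}^N U_i be the Minkowski sum of the sets U_i. If there exist vectors γ_i ∈ ℝ^T, matrices Γ_i ∈ ℝ^{T×T}, and matrices Λ_i ∈ ℝ^{m×m} for i = 1, …, N such that p̄ = Σ_{i=1}^N γ_i, P = Σ_{i=1}^N Γ_i, and for every i: Λ_i ≥ 0, Λ_i H = H Γ_i, and Λ_i h_0 ≤ h_i − H γ_i, then p̄ + P U_0 ⊆ U. -/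
open Pointwise Matrix

/-! Each summand `γᵢ + Γᵢ u` of `p̄ + P u` lies in `𝕌ᵢ`: applying the nonnegative `Λᵢ` to
`H u ≤ h₀` gives `H Γᵢ u = Λᵢ H u ≤ Λᵢ h₀ ≤ hᵢ - H γᵢ`. -/

variable {R m n ι : Type*} [Fintype n]

def hPolytope [NonUnitalNonAssocSemiring R] [LE R] (H : Matrix m n R) (b : m → R) : Set (n → R) :=
  {x | H *ᵥ x ≤ b}

theorem Matrix.mulVec_le_mulVec_of_nonneg [Semiring R] [PartialOrder R] [IsOrderedRing R]
    {A : Matrix m n R} (hA : ∀ i j, 0 ≤ A i j) {x y : n → R} (hxy : x ≤ y) :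
    A *ᵥ x ≤ A *ᵥ y :=
  fun i => dotProduct_le_dotProduct_of_nonneg_left hxy (hA i)

theorem affine_mem_hPolytope [Ring R] [PartialOrder R] [IsOrderedRing R] [Fintype m]
    {H : Matrix m n R} {h₀ h : m → R} {γ : n → R} {Γ : Matrix n n R} {Λ : Matrix m m R}
    (hΛpos : ∀ k l, 0 ≤ Λ k l) (hΛH : Λ * H = H * Γ) (hΛh : Λ *ᵥ h₀ ≤ h - H *ᵥ γ)
    {u : n → R} (hu : u ∈ hPolytope H h₀) :
    γ + Γ *ᵥ u ∈ hPolytope H h :=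
  calc H *ᵥ (γ + Γ *ᵥ u) = H *ᵥ γ + Λ *ᵥ (H *ᵥ u) := by
        rw [mulVec_add, mulVec_mulVec, ← hΛH, ← mulVec_mulVec]
    _ ≤ H *ᵥ γ + Λ *ᵥ h₀ := add_le_add_right (mulVec_le_mulVec_of_nonneg hΛpos hu) _
    _ ≤ h := le_sub_iff_add_le'.mp hΛh

theorem image_sum_affine_subset_sum [NonUnitalNonAssocSemiring R] [Fintype ι]
    (γ : ι → m → R) (Γ : ι → Matrix m n R) {S : Set (n → R)} {V : ι → Set (m → R)}
    (hmaps : ∀ i, ∀ u ∈ S, γ i + Γ i *ᵥ u ∈ V i) :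
    (fun u => ∑ i, γ i + (∑ i, Γ i) *ᵥ u) '' S ⊆ ∑ i, V i := by
  rintro _ ⟨u, hu, rfl⟩
  beta_reduce
  rw [sum_mulVec, ← Finset.sum_add_distrib]
  exact Set.finsetSum_mem_finsetSum _ _ _ fun i _ => hmaps i u hu

/-- **Theorem 1 (AH-polytope in Sum of H-polytopes).**
If `p̄ = Σᵢ γᵢ`, `P = Σᵢ Γᵢ`, and for each `i` there is an entrywise nonnegative `Λᵢ`
with `Λᵢ H = H Γᵢ` and `Λᵢ h₀ ≤ hᵢ - H γᵢ`, then `p̄ + P 𝕌₀ ⊆ 𝕌 = Σᵢ 𝕌ᵢ`. -/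
theorem ah_polytope_in_sum_of_h_polytopes
    {m T N : ℕ}
    (H : Matrix (Fin m) (Fin T) ℝ) (h₀ : Fin m → ℝ) (h : Fin N → Fin m → ℝ)
    (U₀ : Set (Fin T → ℝ)) (hU₀ : U₀ = {u | H.mulVec u ≤ h₀})
    (Ui : Fin N → Set (Fin T → ℝ)) (hUi : ∀ i, Ui i = {u | H.mulVec u ≤ h i})
    (U : Set (Fin T → ℝ)) (hU : U = ∑ i, Ui i)
    (pbar : Fin T → ℝ) (P : Matrix (Fin T) (Fin T) ℝ)
    (γ : Fin N → Fin T → ℝ) (Γ : Fin N → Matrix (Fin T) (Fin T) ℝ)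
    (Λ : Fin N → Matrix (Fin m) (Fin m) ℝ)
    (hpbar : pbar = ∑ i, γ i)
    (hP : P = ∑ i, Γ i)
    (hΛpos : ∀ i, ∀ k l, 0 ≤ Λ i k l)
    (hΛH : ∀ i, Λ i * H = H * Γ i)
    (hΛh : ∀ i, (Λ i).mulVec h₀ ≤ h i - H.mulVec (γ i)) :
    (fun u => pbar + P.mulVec u) '' U₀ ⊆ U := by
  subst hU₀ hU hpbar hP
  refine image_sum_affine_subset_sum γ Γ fun i u hu => ?_
  rw [hUi i]
  exact affine_mem_hPolytope (hΛpos i) (hΛH i) (hΛh i) hu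
end

section
/- Let H ∈ ℝ^{m × T}, let h_0, h_1, …, h_N ∈ ℝ^m, let U_0 = {u ∈ ℝ^T | Hu ≤ h_0} and U_i = {u ∈ ℝ^T | Hu ≤ h_i} for i = 1, …, N. Suppose there exist vectors γ_i ∈ ℝ^T, matrices Γ_i ∈ ℝ^{T×T}, and matrices Λ_i ∈ ℝ^{m×m} for i = 1, …, N such that for every i: Λ_i ≥ 0, Λ_i H = H Γ_i, and Λ_i h_0 ≤ h_i − H γ_i. Set p̄ = Σ_{i=1}^N γ_i and P = Σ_{i=1}^N Γ_i, and suppose P is invertible. Then for every u ∈ p̄ + P U_0, the disaggregated profiles u_i := γ_i + Γ_i P^{−1}(u − p̄) satisfy u_i ∈ U_i for each i = 1, …, N, and Σ_{i=1}^N u_i = u. -/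
/-!
Write `u = p̄ + P v` with `H v ≤ h₀`. Then `P⁻¹ (u - p̄) = v`, so `uᵢ = γᵢ + Γᵢ v`, and these
sum to `p̄ + P v = u`. Feasibility: `Λᵢ ≥ 0` and `H Γᵢ = Λᵢ H` give
`H uᵢ = H γᵢ + Λᵢ (H v) ≤ H γᵢ + Λᵢ h₀ ≤ hᵢ`.
-/

open Matrix

namespace Matrix

variable {m n R : Type*} [Fintype n]

theorem mulVec_mono_of_nonneg [Semiring R] [PartialOrder R] [IsOrderedRing R]
    {A : Matrix m n R} (hA : ∀ k l, 0 ≤ A k l) {x y : n → R} (hxy : x ≤ y) :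
    A *ᵥ x ≤ A *ᵥ y :=
  fun k => dotProduct_le_dotProduct_of_nonneg_left hxy (hA k)

theorem mulVec_add_mulVec_le_of_certificate [Fintype m] [Ring R] [PartialOrder R]
    [IsOrderedRing R] {H : Matrix m n R} {h₀ h₁ : m → R} {γ : n → R} {Γ : Matrix n n R}
    {Λ : Matrix m m R} (hΛ : ∀ k l, 0 ≤ Λ k l) (hΛH : Λ * H = H * Γ) (hΛh : Λ *ᵥ h₀ ≤ h₁ - H *ᵥ γ)
    {v : n → R} (hv : H *ᵥ v ≤ h₀) :
    H *ᵥ (γ + Γ *ᵥ v) ≤ h₁ := by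
  have hHΓ : H *ᵥ (Γ *ᵥ v) = Λ *ᵥ (H *ᵥ v) := by
    rw [mulVec_mulVec, mulVec_mulVec, hΛH]
  calc H *ᵥ (γ + Γ *ᵥ v) = H *ᵥ γ + Λ *ᵥ (H *ᵥ v) := by rw [mulVec_add, hHΓ]
    _ ≤ H *ᵥ γ + Λ *ᵥ h₀ := add_le_add_right (mulVec_mono_of_nonneg hΛ hv) _
    _ ≤ h₁ := le_sub_iff_add_le'.mp hΛh

end Matrix

/-- **Disaggregation with invertible `P`.** Under the conditions of Theorem 1 and
with `P` invertible, every `u ∈ p̄ + P 𝕌₀` yields feasible disaggregated profiles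
`uᵢ := γᵢ + Γᵢ P⁻¹ (u - p̄) ∈ 𝕌ᵢ` that sum to `u`. -/
theorem disaggregation_explicit
    {m T N : ℕ}
    (H : Matrix (Fin m) (Fin T) ℝ) (h₀ : Fin m → ℝ) (h : Fin N → Fin m → ℝ)
    (U₀ : Set (Fin T → ℝ)) (hU₀ : U₀ = {u | H.mulVec u ≤ h₀})
    (Ui : Fin N → Set (Fin T → ℝ)) (hUi : ∀ i, Ui i = {u | H.mulVec u ≤ h i})
    (γ : Fin N → Fin T → ℝ) (Γ : Fin N → Matrix (Fin T) (Fin T) ℝ)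
    (Λ : Fin N → Matrix (Fin m) (Fin m) ℝ)
    (hΛpos : ∀ i, ∀ k l, 0 ≤ Λ i k l)
    (hΛH : ∀ i, Λ i * H = H * Γ i)
    (hΛh : ∀ i, (Λ i).mulVec h₀ ≤ h i - H.mulVec (γ i))
    (pbar : Fin T → ℝ) (P : Matrix (Fin T) (Fin T) ℝ)
    (hpbar : pbar = ∑ i, γ i) (hP : P = ∑ i, Γ i)
    (hPinv : IsUnit P)
    (u : Fin T → ℝ) (hu : u ∈ (fun v => pbar + P.mulVec v) '' U₀) :
    (∀ i, γ i + (Γ i).mulVec (P⁻¹.mulVec (u - pbar)) ∈ Ui i) ∧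
      ∑ i, (γ i + (Γ i).mulVec (P⁻¹.mulVec (u - pbar))) = u := by
  obtain ⟨v, hv, rfl⟩ := hu
  subst hU₀
  have hv_eq : P⁻¹ *ᵥ (pbar + P *ᵥ v - pbar) = v := by
    let := hPinv.invertible
    exact inv_mulVec_eq_vec (add_sub_cancel_left _ _)
  rw [hv_eq]
  refine ⟨fun i => ?_, ?_⟩
  · rw [hUi i]
    exact mulVec_add_mulVec_le_of_certificate (hΛpos i) (hΛH i) (hΛh i) hv
  · rw [Finset.sum_add_distrib, ← sum_mulVec, hpbar, hP]
end
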